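/- Let B be an unbalanced signed graph of order n whose underlying graph is bicyclic (connected with exactly n + 1 edges), and suppose B has nullity n − 4 and contains a pendant vertex u with neighbor v. Then the signed graph B − u − v obtained by deleting u and v is the disjoint union of a balanced complete bipartite signed graph and some isolated vertices; in particular, the underlying graph of the non-isolated part of B − u − v is a star, a 4-cycle, or the complete bipartite graph K_{2,3}. -/

import Mathlib

/-!
Deleting a pendant vertex `u` together with its neighbour `v` lowers the rank of the adjacency
matrix by exactly two, since the row and the column of `u` each have a single nonzero entry, at
`v`; so nullity `n - 4` means that `B - u - v` has rank two. For a symmetric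
zero-diagonal matrix `A` of rank two and an edge `xy`, the vanishing of the `3 × 3` minors gives
`A x y * A i j = A i x * A j y + A i y * A j x`. Hence the neighbourhoods `X` of `y` and `Y` of `x`
are disjoint, the edges of `B - u - v` are exactly those between `X` and `Y`, and the signs are
switching equivalent to all positive. Finally, by connectivity every vertex outside
`X ∪ Y ∪ {v}` (`u` among them) and at least one vertex of `X ∪ Y` is adjacent to `v`; comparing
these edges with the `n + 1` edges of a bicyclic graph gives `|X| |Y| ≤ |X| + |Y| + 1`.
-/

/- The adjacency matrix of a signed graph `(G, σ)`: the `(u,v)` entry is `σ u v`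
if `uv` is an edge of `G`, and `0` otherwise. -/
open Classical in
noncomputable def signedAdj {V : Type*} (G : SimpleGraph V) (σ : V → V → ℝ) :
    Matrix V V ℝ :=
  Matrix.of fun u v => if G.Adj u v then σ u v else 0

/-- The sign of a walk: the product of the signs of its edges. -/
def walkSign {V : Type*} {G : SimpleGraph V} (σ : V → V → ℝ) {u v : V}
    (p : G.Walk u v) : ℝ :=
  (p.darts.map fun d => σ d.toProd.1 d.toProd.2).prod

/-- A signed graph is balanced if every cycle is positive. -/
def IsBalanced {V : Type*} (G : SimpleGraph V) (σ : V → V → ℝ) : Prop :=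
  ∀ (u : V) (c : G.Walk u u), c.IsCycle → walkSign σ c = 1


open Matrix Module Submodule

theorem Matrix.rank_eq_rank_submatrix_add_one {K m n : Type*} [Field K] [Fintype m] [Fintype n]
    [DecidableEq n] (A : Matrix m n K) (i : m) (j : n) (hrow : ∀ k ≠ j, A i k = 0)
    (hij : A i j ≠ 0) :
    A.rank =
      (A.submatrix (fun r : {r // r ≠ i} => r.1) (fun c : {c // c ≠ j} => c.1)).rank + 1 := by
  set W : Submodule K (m → K) := span K (A.col '' {j}ᶜ)
  have hW : W ≤ LinearMap.ker (LinearMap.proj i) :=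
    span_le.2 (by rintro _ ⟨k, hk, rfl⟩; exact hrow k hk)
  let π : (m → K) →ₗ[K] ({r // r ≠ i} → K) := LinearMap.funLeft K K Subtype.val
  -- Deleting the `i`-th coordinate loses nothing on `W`, where that coordinate vanishes.
  have hπ : Function.Injective (π ∘ₗ W.subtype) := by
    rw [← LinearMap.ker_eq_bot, eq_bot_iff]
    rintro ⟨x, hx⟩ h
    ext r
    by_cases hr : r = i
    · subst hr; exact hW hx
    · exact congrFun h ⟨r, hr⟩
  have hB : (A.submatrix (fun r : {r // r ≠ i} => r.1) (fun c : {c // c ≠ j} => c.1)).rank =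
      finrank K W := by
    rw [rank_eq_finrank_span_cols, ← LinearMap.finrank_range_of_inj hπ, LinearMap.range_comp,
      range_subtype, map_span, ← Set.image_comp, Set.image_eq_range]
    rfl
  rw [hB, rank_eq_finrank_span_cols, ← Set.insert_image_compl_eq_range, span_insert, sup_comm,
    finrank_sup_span_singleton (fun h => hij (hW h))]

theorem Matrix.rank_eq_rank_submatrix_add_two {K n : Type*} [Field K] [Fintype n]
    [DecidableEq n] (A : Matrix n n K) {u v : n} (huv : u ≠ v) (hrow : ∀ w ≠ v, A u w = 0)
    (hcol : ∀ w ≠ v, A w u = 0) (huv' : A u v ≠ 0) (hvu : A v u ≠ 0) :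
    A.rank = (A.submatrix (fun w : {w // w ≠ u ∧ w ≠ v} => w.1)
      (fun w : {w // w ≠ u ∧ w ≠ v} => w.1)).rank + 2 := by
  set A₁ := A.submatrix (fun r : {r // r ≠ u} => r.1) (fun c : {c // c ≠ v} => c.1)
  have h₁ : A₁ᵀ.rank = (A₁ᵀ.submatrix (fun r : {r // r ≠ (⟨u, huv⟩ : {c // c ≠ v})} => r.1)
      (fun c : {c // c ≠ (⟨v, huv.symm⟩ : {r // r ≠ u})} => c.1)).rank + 1 :=
    A₁ᵀ.rank_eq_rank_submatrix_add_one _ _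
      (fun k hk => hcol k (fun h => hk (Subtype.ext h))) hvu
  let e (a b : n) (hba : b ≠ a) : {r : {r // r ≠ a} // r ≠ ⟨b, hba⟩} ≃ {w // w ≠ a ∧ w ≠ b} :=
    (Equiv.subtypeEquivRight fun _ => Subtype.ext_iff.not).trans
      (Equiv.subtypeSubtypeEquivSubtypeInter (· ≠ a) (· ≠ b))
  rw [A.rank_eq_rank_submatrix_add_one u v hrow huv', ← rank_transpose, h₁, ← rank_transpose,
    add_assoc, ← rank_submatrix _ (e u v huv.symm).symm
      ((e v u huv).trans (Equiv.subtypeEquivRight fun _ => and_comm)).symm]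
  rfl

theorem Matrix.det_submatrix_eq_zero_of_rank_lt {K m n ι : Type*} [Field K] [Fintype n]
    [Fintype ι] [DecidableEq ι] (A : Matrix m n K) (f : ι → m) (g : ι → n)
    (h : A.rank < Fintype.card ι) : (A.submatrix f g).det = 0 := by
  by_contra hdet
  exact (rank_of_det_ne_zero hdet ▸ A.rank_submatrix_le f g).not_gt h

section RankTwo

variable {K n : Type*} [Field K] [Fintype n] {M : Matrix n n K}

theorem Matrix.mul_apply_eq_of_rank_le_two (hsymm : M.IsSymm) (hdiag : ∀ i, M i i = 0)
    (hrank : M.rank ≤ 2) {x y : n} (hxy : M x y ≠ 0) (i j : n) :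
    M x y * M i j = M i x * M j y + M i y * M j x := by
  have hminor := M.det_submatrix_eq_zero_of_rank_lt ![x, y, i] ![x, y, j]
    (by rw [Fintype.card_fin]; omega)
  simp only [det_fin_three, submatrix_apply, Matrix.cons_val, hdiag, hsymm.apply x y,
    hsymm.apply j x, hsymm.apply j y] at hminor
  apply mul_left_cancel₀ hxy
  linear_combination -hminor

theorem Matrix.mul_apply_eq_zero_of_rank_le_two [NeZero (2 : K)] (hsymm : M.IsSymm)
    (hdiag : ∀ i, M i i = 0) (hrank : M.rank ≤ 2) {x y : n} (hxy : M x y ≠ 0) (i : n) :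
    M i x * M i y = 0 := by
  have h := mul_apply_eq_of_rank_le_two hsymm hdiag hrank hxy i i
  rw [hdiag, mul_zero] at h
  have : (2 : K) * (M i x * M i y) = 0 := by linear_combination -h
  exact (mul_eq_zero.1 this).resolve_left two_ne_zero

end RankTwo

section SignedGraph

variable {V : Type*} {G : SimpleGraph V} {σ : V → V → ℝ}

theorem signedAdj_apply_of_adj {a b : V} (h : G.Adj a b) : signedAdj G σ a b = σ a b := by
  simp [signedAdj, h]

theorem signedAdj_apply_of_not_adj {a b : V} (h : ¬G.Adj a b) : signedAdj G σ a b = 0 := by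
  simp [signedAdj, h]

theorem signedAdj_apply_self (a : V) : signedAdj G σ a a = 0 :=
  signedAdj_apply_of_not_adj G.irrefl

theorem signedAdj_apply_ne_zero_iff (hσ : ∀ a b, G.Adj a b → σ a b ≠ 0) {a b : V} :
    signedAdj G σ a b ≠ 0 ↔ G.Adj a b := by
  by_cases h : G.Adj a b
  · simpa [signedAdj_apply_of_adj h, h] using hσ a b h
  · simp [signedAdj_apply_of_not_adj h, h]

theorem signedAdj_isSymm (hsym : ∀ a b, σ a b = σ b a) : (signedAdj G σ).IsSymm :=
  IsSymm.ext fun a b => by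
    by_cases h : G.Adj a b
    · rw [signedAdj_apply_of_adj h, signedAdj_apply_of_adj h.symm, hsym]
    · rw [signedAdj_apply_of_not_adj h, signedAdj_apply_of_not_adj (mt G.adj_symm h)]

theorem signedAdj_induce (s : Set V) :
    signedAdj (G.induce s) (fun a b => σ a b) = (signedAdj G σ).submatrix (↑) (↑) :=
  rfl

theorem walkSign_eq_mul {θ : V → ℝ} (hθ : ∀ a, θ a * θ a = 1)
    (hσ : ∀ a b, G.Adj a b → σ a b = θ a * θ b) {a b : V} (p : G.Walk a b) :
    walkSign σ p = θ a * θ b := by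
  induction p with
  | nil => exact (hθ _).symm
  | @cons a b c h _ ih =>
    rw [walkSign, SimpleGraph.Walk.darts_cons, List.map_cons, List.prod_cons, ← walkSign, ih,
      hσ a b h]
    linear_combination θ a * θ c * hθ b

theorem isBalanced_of_eq_mul {θ : V → ℝ} (hθ : ∀ a, θ a * θ a = 1)
    (hσ : ∀ a b, G.Adj a b → σ a b = θ a * θ b) : IsBalanced G σ :=
  fun a c _ => (walkSign_eq_mul hθ hσ c).trans (hθ a)

variable [Fintype V]

theorem rank_signedAdj_eq_rank_induce_add_two [DecidableEq V]
    (hσ : ∀ a b, G.Adj a b → σ a b ≠ 0) {u v : V} (hpend : G.neighborSet u = {v}) :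
    (signedAdj G σ).rank =
      (signedAdj (G.induce {w : V | w ≠ u ∧ w ≠ v}) fun a b => σ a.1 b.1).rank + 2 := by
  have hu : ∀ w, w ≠ v → ¬G.Adj u w := fun w hw h => hw (hpend ▸ h : w ∈ ({v} : Set V))
  have huv : G.Adj u v := show v ∈ G.neighborSet u from hpend ▸ rfl
  exact (signedAdj G σ).rank_eq_rank_submatrix_add_two huv.ne
    (fun w hw => signedAdj_apply_of_not_adj (hu w hw))
    (fun w hw => signedAdj_apply_of_not_adj fun h => hu w hw h.symm)
    ((signedAdj_apply_ne_zero_iff hσ).2 huv) ((signedAdj_apply_ne_zero_iff hσ).2 huv.symm)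

theorem not_adj_of_rank_signedAdj_le_two (hsym : ∀ a b, σ a b = σ b a)
    (hσ : ∀ a b, G.Adj a b → σ a b ≠ 0) (hrank : (signedAdj G σ).rank ≤ 2) {x y i : V}
    (hxy : G.Adj x y) (hix : G.Adj i x) : ¬G.Adj i y := fun hiy =>
  mul_ne_zero ((signedAdj_apply_ne_zero_iff hσ).2 hix) ((signedAdj_apply_ne_zero_iff hσ).2 hiy)
    (mul_apply_eq_zero_of_rank_le_two (signedAdj_isSymm hsym) signedAdj_apply_self hrank
      ((signedAdj_apply_ne_zero_iff hσ).2 hxy) i)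

theorem mul_signedAdj_eq_of_rank_le_two (hsym : ∀ a b, σ a b = σ b a)
    (hσ : ∀ a b, G.Adj a b → σ a b ≠ 0) (hrank : (signedAdj G σ).rank ≤ 2) {x y i j : V}
    (hxy : G.Adj x y) (hiy : G.Adj i y) (hjx : G.Adj j x) :
    σ x y * signedAdj G σ i j = σ i y * σ j x := by
  rw [← signedAdj_apply_of_adj (σ := σ) hxy, mul_apply_eq_of_rank_le_two (signedAdj_isSymm hsym)
    signedAdj_apply_self hrank ((signedAdj_apply_ne_zero_iff hσ).2 hxy),
    signedAdj_apply_of_not_adj fun hix =>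
      not_adj_of_rank_signedAdj_le_two hsym hσ hrank hxy hix hiy,
    signedAdj_apply_of_adj hiy, signedAdj_apply_of_adj hjx, zero_mul, zero_add]

theorem adj_iff_of_rank_signedAdj_le_two (hsym : ∀ a b, σ a b = σ b a)
    (hσ : ∀ a b, G.Adj a b → σ a b ≠ 0) (hrank : (signedAdj G σ).rank ≤ 2) {x y : V}
    (hxy : G.Adj x y) (i j : V) :
    G.Adj i j ↔ (G.Adj i y ∧ G.Adj j x) ∨ (G.Adj i x ∧ G.Adj j y) := by
  have hA : ∀ {a b}, signedAdj G σ a b ≠ 0 ↔ G.Adj a b := signedAdj_apply_ne_zero_iff hσ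
  have hcross : ∀ i j, G.Adj i y → G.Adj j x → G.Adj i j := fun i j hi hj =>
    hA.1 <| right_ne_zero_of_mul (a := σ x y) <|
      mul_signedAdj_eq_of_rank_le_two hsym hσ hrank hxy hi hj ▸
        mul_ne_zero (hσ i y hi) (hσ j x hj)
  refine ⟨fun h => ?_, ?_⟩
  · have hsum := mul_apply_eq_of_rank_le_two (signedAdj_isSymm hsym) signedAdj_apply_self hrank
      (hA.2 hxy) i j ▸ mul_ne_zero (hA.2 hxy) (hA.2 h)
    by_cases hyx : signedAdj G σ i y * signedAdj G σ j x = 0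
    · rw [hyx, add_zero] at hsum
      exact Or.inr ⟨hA.1 (left_ne_zero_of_mul hsum), hA.1 (right_ne_zero_of_mul hsum)⟩
    · exact Or.inl ⟨hA.1 (left_ne_zero_of_mul hyx), hA.1 (right_ne_zero_of_mul hyx)⟩
  · rintro (⟨hi, hj⟩ | ⟨hi, hj⟩)
    · exact hcross i j hi hj
    · exact (hcross j i hj hi).symm

theorem exists_bipartition_of_rank_signedAdj_eq_two (hsym : ∀ a b, σ a b = σ b a)
    (hσ : ∀ a b, G.Adj a b → σ a b ≠ 0) (hrank : (signedAdj G σ).rank = 2) :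
    ∃ X Y : Set V, X.Nonempty ∧ Y.Nonempty ∧ Disjoint X Y ∧
      ∀ a b, G.Adj a b ↔ (a ∈ X ∧ b ∈ Y) ∨ (a ∈ Y ∧ b ∈ X) := by
  obtain ⟨x, y, hxy⟩ : ∃ x y, G.Adj x y := by
    by_contra! h
    have : signedAdj G σ = 0 := Matrix.ext fun a b => signedAdj_apply_of_not_adj (h a b)
    simp [this] at hrank
  refine ⟨{i | G.Adj i y}, {i | G.Adj i x}, ⟨x, hxy⟩, ⟨y, hxy.symm⟩,
    Set.disjoint_left.2 fun i hy hx => not_adj_of_rank_signedAdj_le_two hsym hσ hrank.le hxy hx hy,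
    adj_iff_of_rank_signedAdj_le_two hsym hσ hrank.le hxy⟩

theorem isBalanced_of_rank_signedAdj_le_two (hsym : ∀ a b, σ a b = σ b a)
    (hsgn : ∀ a b, G.Adj a b → σ a b = 1 ∨ σ a b = -1) (hrank : (signedAdj G σ).rank ≤ 2) :
    IsBalanced G σ := by
  classical
  have hsq : ∀ a b, G.Adj a b → σ a b * σ a b = 1 := fun a b h => by
    rcases hsgn a b h with h | h <;> simp [h]
  have hσ : ∀ a b, G.Adj a b → σ a b ≠ 0 := fun a b h => left_ne_zero_of_mul_eq_one (hsq a b h)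
  by_cases hedge : ∃ x y, G.Adj x y
  swap
  · exact isBalanced_of_eq_mul (θ := 1) (fun _ => mul_one 1) fun a b h => (hedge ⟨a, b, h⟩).elim
  obtain ⟨x, y, hxy⟩ := hedge
  -- Switching at `θ` makes every edge positive: `θ` is read off the edges at `x` and `y`.
  let θ : V → ℝ := fun i => if G.Adj i y then σ i y else if G.Adj i x then σ x y * σ i x else 1
  have hθ : ∀ a, θ a * θ a = 1 := fun a => by
    simp only [θ]
    split_ifs with hy hx
    · exact hsq a y hy
    · linear_combination σ a x * σ a x * hsq x y hxy + hsq a x hx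
    · exact one_mul 1
  have hθσ : ∀ i j, G.Adj i y → G.Adj j x → σ i j = θ i * θ j := fun i j hi hj => by
    have h := mul_signedAdj_eq_of_rank_le_two hsym hσ hrank hxy hi hj
    rw [signedAdj_apply_of_adj (((adj_iff_of_rank_signedAdj_le_two hsym hσ hrank hxy i j).2
      (Or.inl ⟨hi, hj⟩)))] at h
    simp only [θ, if_pos hi, if_neg (not_adj_of_rank_signedAdj_le_two hsym hσ hrank hxy hj),
      if_pos hj]
    linear_combination σ x y * h - σ i j * hsq x y hxy
  refine isBalanced_of_eq_mul hθ fun a b h => ?_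
  rcases (adj_iff_of_rank_signedAdj_le_two hsym hσ hrank hxy a b).1 h with ⟨ha, hb⟩ | ⟨ha, hb⟩
  · exact hθσ a b ha hb
  · rw [hsym, mul_comm]
    exact hθσ b a hb ha

end SignedGraph

theorem Set.injective_sym2Mk_of_disjoint {α : Type*} {X Y : Set α} (h : Disjoint X Y) :
    Function.Injective fun p : X × Y => s(p.1.1, p.2.1) := by
  rintro ⟨x, y⟩ ⟨x', y'⟩ hxy
  rcases Sym2.eq_iff.1 hxy with ⟨h₁, h₂⟩ | ⟨h₁, -⟩
  · exact Prod.ext (Subtype.ext h₁) (Subtype.ext h₂)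
  · exact absurd h₁ (h.ne_of_mem x.2 y'.2)

namespace SimpleGraph

variable {V : Type*} {G : SimpleGraph V}

theorem Connected.adj_of_forall_adj_eq (hconn : G.Connected) {v w : V} (hwv : w ≠ v)
    (h : ∀ z, G.Adj w z → z = v) : G.Adj w v := by
  obtain ⟨p⟩ := hconn.preconnected w v
  cases p with
  | nil => exact absurd rfl hwv
  | cons hadj _ => exact h _ hadj ▸ hadj

theorem Connected.exists_adj_of_forall_adj_mem (hconn : G.Connected) {S : Set V} {v x : V}
    (hx : x ∈ S) (hv : v ∉ S) (h : ∀ a ∈ S, ∀ b ∉ S, G.Adj a b → b = v) : ∃ a ∈ S, G.Adj a v := by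
  obtain ⟨p⟩ := hconn.preconnected x v
  obtain ⟨d, -, hd₁, hd₂⟩ := p.exists_boundary_dart S hx hv
  exact ⟨d.fst, hd₁, h _ hd₁ _ hd₂ d.adj ▸ d.adj⟩

variable [Fintype V]

theorem four_le_card_of_card_lt_ncard_edgeSet (h : Fintype.card V < G.edgeSet.ncard) :
    4 ≤ Fintype.card V := by
  classical
  rw [← coe_edgeFinset, Set.ncard_coe_finset] at h
  have hlt := h.trans_le G.card_edgeFinset_le_card_choose_two
  generalize Fintype.card V = n at hlt ⊢
  by_contra! hn
  interval_cases n <;> simp at hlt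

/-- The edges counted are those between `X` and `Y`, those joining `v` to the vertices outside
`X ∪ Y ∪ {v}`, and one edge joining `v` to `X ∪ Y`, which exists by connectivity. -/
theorem ncard_mul_ncard_add_card_le (hconn : G.Connected) {X Y : Set V} {v : V}
    (hXY : Disjoint X Y) (hX : X.Nonempty) (hv : v ∉ X ∪ Y) (hbip : ∀ x ∈ X, ∀ y ∈ Y, G.Adj x y)
    (hout : ∀ w ∉ X ∪ Y, w ≠ v → ∀ z, G.Adj w z → z = v) :
    X.ncard * Y.ncard + Fintype.card V ≤ G.edgeSet.ncard + X.ncard + Y.ncard := by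
  obtain ⟨w₀, hw₀, hw₀v⟩ := hconn.exists_adj_of_forall_adj_mem (Set.mem_union_left Y hX.some_mem)
    hv fun a ha b hb hab => by_contra fun hbv => (hout b hb hbv a hab.symm ▸ hv) ha
  set T := (insert v (X ∪ Y))ᶜ
  have hT : ∀ w ∈ T, w ∉ X ∪ Y ∧ w ≠ v := fun w hw => by simpa [T, not_or, and_comm] using hw
  let f : X × Y → Sym2 V := fun p => s(p.1.1, p.2.1)
  let g : Option T → Sym2 V := fun o => s(v, o.elim w₀ Subtype.val)
  have hg : Function.Injective g := by
    refine fun o o' h => ?_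
    replace h := Sym2.congr_right.1 h
    rcases o with _ | w <;> rcases o' with _ | w'
    · rfl
    · exact ((hT w' w'.2).1 (by rw [← show w₀ = w' from h]; exact hw₀)).elim
    · exact ((hT w w.2).1 (by rw [show (w : V) = w₀ from h]; exact hw₀)).elim
    · exact congrArg some (Subtype.ext h)
  have hfg : ∀ p o, f p ≠ g o := fun p o h => hv <| by
    rcases Sym2.mem_iff.1 (h ▸ Sym2.mem_mk_left v _ : v ∈ f p) with h | h
    · exact h ▸ Or.inl p.1.2
    · exact h ▸ Or.inr p.2.2
  have hmem : ∀ d, Sum.elim f g d ∈ G.edgeSet := by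
    rintro (⟨x, y⟩ | _ | w)
    · exact hbip x x.2 y y.2
    · exact hw₀v.symm
    · exact (hconn.adj_of_forall_adj_eq (hT w w.2).2 (hout w (hT w w.2).1 (hT w w.2).2)).symm
  have hcard := Nat.card_le_card_of_injective (fun d => (⟨_, hmem d⟩ : G.edgeSet))
    fun d d' h => ((Set.injective_sym2Mk_of_disjoint hXY).sumElim hg hfg) (congrArg Subtype.val h)
  have hTcard : T.ncard + (X.ncard + Y.ncard + 1) = Fintype.card V := by
    rw [← Set.ncard_union_eq hXY, ← Set.ncard_insert_of_notMem hv, add_comm,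
      Set.ncard_add_ncard_compl, Nat.card_eq_fintype_card]
  simp only [Nat.card_sum, Nat.card_prod, Finite.card_option, Nat.card_coe_set_eq] at hcard
  omega

theorem ncard_mul_ncard_add_card_le_of_neighborSet_eq (hconn : G.Connected) {u v : V}
    (hpend : G.neighborSet u = {v}) {X Y : Set ↥{w : V | w ≠ u ∧ w ≠ v}} (hXY : Disjoint X Y)
    (hX : X.Nonempty) (hadj : ∀ a b, (G.induce {w : V | w ≠ u ∧ w ≠ v}).Adj a b ↔
      (a ∈ X ∧ b ∈ Y) ∨ (a ∈ Y ∧ b ∈ X)) :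
    X.ncard * Y.ncard + Fintype.card V ≤ G.edgeSet.ncard + X.ncard + Y.ncard := by
  have hadj_u : ∀ w, G.Adj u w ↔ w = v := fun w => Set.ext_iff.1 hpend w
  have hout : ∀ w ∉ (↑) '' X ∪ (↑) '' Y, w ≠ v → ∀ z, G.Adj w z → z = v := by
    intro w hw hwv z hwz
    by_cases hwu : w = u
    · exact (hadj_u z).1 (hwu ▸ hwz)
    by_contra hzv
    have hzu : z ≠ u := fun h => hwv ((hadj_u w).1 (h ▸ hwz.symm))
    rcases (hadj ⟨w, hwu, hwv⟩ ⟨z, hzu, hzv⟩).1 hwz with ⟨h, -⟩ | ⟨h, -⟩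
    · exact hw (Or.inl ⟨_, h, rfl⟩)
    · exact hw (Or.inr ⟨_, h, rfl⟩)
  have h := ncard_mul_ncard_add_card_le hconn
    ((Set.disjoint_image_iff Subtype.val_injective).2 hXY) (hX.image _)
    (by rintro (⟨a, -, ha⟩ | ⟨a, -, ha⟩) <;> exact a.2.2 ha)
    (by rintro _ ⟨a, ha, rfl⟩ _ ⟨b, hb, rfl⟩; exact (hadj a b).2 (Or.inl ⟨ha, hb⟩)) hout
  rwa [Set.ncard_image_of_injective _ Subtype.val_injective,
    Set.ncard_image_of_injective _ Subtype.val_injective] at h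

end SimpleGraph

theorem Nat.eq_of_mul_le_add_add_one {a b : ℕ} (ha : 1 ≤ a) (hb : 1 ≤ b)
    (h : a * b ≤ a + b + 1) :
    (a = 1 ∨ b = 1) ∨ (a = 2 ∧ b = 2) ∨ (a = 2 ∧ b = 3) ∨ (a = 3 ∧ b = 2) := by
  by_cases ha1 : a = 1
  · exact Or.inl (Or.inl ha1)
  by_cases hb1 : b = 1
  · exact Or.inl (Or.inr hb1)
  have ha3 : a ≤ 3 := by nlinarith [show 2 ≤ b by omega]
  have hb3 : b ≤ 3 := by nlinarith [show 2 ≤ a by omega]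
  interval_cases a <;> interval_cases b <;> omega

theorem unbalanced_bicyclic_nullity_sub_four_pendant_structure_general
    {V : Type*} [Fintype V] (G : SimpleGraph V) (σ : V → V → ℝ)
    (hsym : ∀ u v, σ u v = σ v u)
    (hsgn : ∀ u v, G.Adj u v → σ u v = 1 ∨ σ u v = -1)
    (hconn : G.Connected)
    (hbic : G.edgeSet.ncard = Fintype.card V + 1)
    (hnull : Fintype.card V - (signedAdj G σ).rank = Fintype.card V - 4)
    (u v : V) (hpend : G.neighborSet u = {v}) :
    ∃ X Y : Set ↥{w : V | w ≠ u ∧ w ≠ v},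
      X.Nonempty ∧ Y.Nonempty ∧ Disjoint X Y ∧
      (∀ a b : ↥{w : V | w ≠ u ∧ w ≠ v},
        (G.induce {w : V | w ≠ u ∧ w ≠ v}).Adj a b ↔
          (a ∈ X ∧ b ∈ Y) ∨ (a ∈ Y ∧ b ∈ X)) ∧
      IsBalanced (G.induce {w : V | w ≠ u ∧ w ≠ v}) (fun a b => σ a.1 b.1) ∧
      ((X.ncard = 1 ∨ Y.ncard = 1) ∨
        (X.ncard = 2 ∧ Y.ncard = 2) ∨
        (X.ncard = 2 ∧ Y.ncard = 3) ∨ (X.ncard = 3 ∧ Y.ncard = 2)) := by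
  classical
  have hσ : ∀ a b, G.Adj a b → σ a b ≠ 0 := fun a b h => by
    rcases hsgn a b h with h | h <;> simp [h]
  have hrank : (signedAdj (G.induce {w : V | w ≠ u ∧ w ≠ v}) fun a b => σ a.1 b.1).rank = 2 := by
    have := rank_signedAdj_eq_rank_induce_add_two hσ hpend
    have := G.four_le_card_of_card_lt_ncard_edgeSet (hbic ▸ Nat.lt_succ_self _)
    have := (signedAdj G σ).rank_le_card_width
    omega
  obtain ⟨X, Y, hX, hY, hXY, hadj⟩ :=
    exists_bipartition_of_rank_signedAdj_eq_two (G := G.induce _) (fun a b => hsym a b)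
      (fun a b h => hσ a b h) hrank
  refine ⟨X, Y, hX, hY, hXY, hadj, isBalanced_of_rank_signedAdj_le_two (G := G.induce _)
    (fun a b => hsym a b) (fun a b h => hsgn a b h) hrank.le,
    Nat.eq_of_mul_le_add_add_one ?_ ?_ ?_⟩
  · exact (Set.ncard_pos X.toFinite).2 hX
  · exact (Set.ncard_pos Y.toFinite).2 hY
  · have := G.ncard_mul_ncard_add_card_le_of_neighborSet_eq hconn hpend hXY hX hadj
    omega

/-- Let `B` be an unbalanced bicyclic signed graph of order `n` with nullity
`n - 4`, containing a pendant vertex `u` whose unique neighbor is `v`.  Then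
`B - u - v` is a balanced complete bipartite signed graph (with parts `X`, `Y`)
together with some isolated vertices, and the underlying graph of its
non-isolated part is a star, a `4`-cycle, or `K_{2,3}`. -/
theorem unbalanced_bicyclic_nullity_sub_four_pendant_structure
    {V : Type*} [Fintype V] (G : SimpleGraph V) (σ : V → V → ℝ)
    (hsym : ∀ u v, σ u v = σ v u)
    (hsgn : ∀ u v, G.Adj u v → σ u v = 1 ∨ σ u v = -1)
    (hconn : G.Connected)
    (hbic : G.edgeSet.ncard = Fintype.card V + 1)
    (hunbal : ¬ IsBalanced G σ)
    (hnull : Fintype.card V - (signedAdj G σ).rank = Fintype.card V - 4)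
    (u v : V) (hpend : G.neighborSet u = {v}) :
    ∃ X Y : Set ↥{w : V | w ≠ u ∧ w ≠ v},
      X.Nonempty ∧ Y.Nonempty ∧ Disjoint X Y ∧
      (∀ a b : ↥{w : V | w ≠ u ∧ w ≠ v},
        (G.induce {w : V | w ≠ u ∧ w ≠ v}).Adj a b ↔
          (a ∈ X ∧ b ∈ Y) ∨ (a ∈ Y ∧ b ∈ X)) ∧
      IsBalanced (G.induce {w : V | w ≠ u ∧ w ≠ v}) (fun a b => σ a.1 b.1) ∧
      ((X.ncard = 1 ∨ Y.ncard = 1) ∨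
        (X.ncard = 2 ∧ Y.ncard = 2) ∨
        (X.ncard = 2 ∧ Y.ncard = 3) ∨ (X.ncard = 3 ∧ Y.ncard = 2)) :=
  unbalanced_bicyclic_nullity_sub_four_pendant_structure_general G σ hsym hsgn hconn hbic hnull u v
    hpend
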